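/- arXiv:0709.3506 — 6 statements merged into one kernel-verified Lean document; each statement's English description precedes it below -/
import Mathlib

section
/- Let C be a group, α an automorphism of C with α² = 1, and A, B α-stable subgroups with C = AB. If every element z of A ∩ B satisfying α(z) = z⁻¹ can be written as y·α(y)⁻¹ for some y ∈ A ∩ B, then every α-fixed element of C is a product of an α-fixed element of A and an α-fixed element of B, i.e. Cᵅ = Aᵅ Bᵅ. -/
/-- If `α` is an automorphism of a group `C` with `α² = 1`, and `A`, `B` are `α`-stable
subgroups with `C = AB`, and every `z ∈ A ∩ B` with `α z = z⁻¹` can be written as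
`y * α(y)⁻¹` with `y ∈ A ∩ B`, then every `α`-fixed element of `C` is a product of an
`α`-fixed element of `A` and an `α`-fixed element of `B`, i.e. `Cᵅ = Aᵅ Bᵅ`. -/
theorem fixed_points_factorization {C : Type*} [Group C] (α : C ≃* C)
    (hα : ∀ c : C, α (α c) = c)
    (A B : Subgroup C)
    (hA : ∀ a ∈ A, α a ∈ A) (hB : ∀ b ∈ B, α b ∈ B)
    (hAB : ∀ c : C, ∃ a ∈ A, ∃ b ∈ B, c = a * b)
    (hcoh : ∀ z ∈ A ⊓ B, α z = z⁻¹ → ∃ y ∈ A ⊓ B, z = y * (α y)⁻¹) :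
    ∀ c : C, α c = c → ∃ a ∈ A, ∃ b ∈ B, α a = a ∧ α b = b ∧ c = a * b := by
  intro c hc
  obtain ⟨a, ha, b, hb, rfl⟩ := hAB c
  -- z = a⁻¹ α a = b (α b)⁻¹
  set z := a⁻¹ * α a with hz
  have heq : a⁻¹ * α a = b * (α b)⁻¹ := by
    have : α a * α b = a * b := by simpa using hc
    have h1 : α a = a * b * (α b)⁻¹ := by
      rw [← this]; group
    rw [h1]; group
  have hzA : z ∈ A := A.mul_mem (A.inv_mem ha) (hA a ha)
  have hzB : z ∈ B := by
    rw [hz, heq]; exact B.mul_mem hb (B.inv_mem (hB b hb))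
  have hzinv : α z = z⁻¹ := by
    rw [hz, map_mul, map_inv, hα]
    group
  obtain ⟨y, hy, hyz⟩ := hcoh z ⟨hzA, hzB⟩ hzinv
  obtain ⟨hyA, hyB⟩ := hy
  refine ⟨a * y, A.mul_mem ha hyA, y⁻¹ * b, B.mul_mem (B.inv_mem hyB) hb, ?_, ?_, by group⟩
  · -- α (a y) = a y
    have hαa : α a = a * z := by rw [hz]; group
    rw [map_mul, hαa, hz] at *
    rw [hyz]; group
  · -- α (y⁻¹ b) = y⁻¹ b
    have hαb : α b = z⁻¹ * b := by
      have : z = b * (α b)⁻¹ := by rw [hz, heq]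
      rw [this]; group
    rw [map_mul, map_inv, hαb, hyz]
    group
end

section
/- Let C be a group in which every element has a unique square root (C is strongly 2-divisible), and let α be an automorphism of C with α² = 1. Then the set Z¹_α(C) = {z ∈ C : α(z) = z⁻¹} is strongly 2-divisible, and consequently every element of Z¹_α(C) lies in B¹_α(C) = {y α(y)⁻¹ : y ∈ C}. -/
/-- If every element of a group `C` has a unique square root and `α` is an automorphism
of `C` with `α² = 1`, then the set `Z¹_α(C) = {z : α z = z⁻¹}` is strongly 2-divisible
(each of its elements has a unique square root lying in it), and consequently every
element of `Z¹_α(C)` lies in `B¹_α(C) = {y * α(y)⁻¹}`. -/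
theorem strongly_two_divisible_Zone {C : Type*} [Group C]
    (hC : ∀ s : C, ∃! t : C, t ^ 2 = s)
    (α : C ≃* C) (hα : ∀ c : C, α (α c) = c) :
    (∀ z : C, α z = z⁻¹ → ∃! t : C, α t = t⁻¹ ∧ t ^ 2 = z) ∧
    (∀ z : C, α z = z⁻¹ → ∃ y : C, z = y * (α y)⁻¹) := by
  have key : ∀ z : C, α z = z⁻¹ → ∃! t : C, α t = t⁻¹ ∧ t ^ 2 = z := by
    intro z hz
    obtain ⟨t, ht, huniq⟩ := hC z
    have hαt : α t = t⁻¹ := by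
      obtain ⟨s, hs, hsu⟩ := hC z⁻¹
      have h1 : (α t) ^ 2 = z⁻¹ := by
        rw [← map_pow, ht, hz]
      have h2 : (t⁻¹) ^ 2 = z⁻¹ := by
        rw [inv_pow, ht]
      rw [hsu _ h1, hsu _ h2]
    exact ⟨t, ⟨hαt, ht⟩, fun u hu => huniq u hu.2⟩
  refine ⟨key, fun z hz => ?_⟩
  obtain ⟨t, ⟨hαt, ht⟩, _⟩ := key z hz
  exact ⟨t, by rw [hαt, inv_inv, ← sq, ht]⟩
end

section
/- Let p be odd and H a Heisenberg p-group with center Z. Suppose α is an automorphism of H of order two whose restriction to Z is nontrivial (hence is inversion on Z). Then: (a) Hᵅ⁺ = {h : α(h) = h} and Ĥᵅ⁻ = {h : α(h) = h⁻¹} are subgroups of H; (b) Hᵅ⁺ ∩ Z = {1} and Z ⊆ Ĥᵅ⁻; (c) the images W⁺ and W⁻ of Hᵅ⁺ and Ĥᵅ⁻ in W = H/Z satisfy W = W⁺ ⊕ W⁻, and W⁺, W⁻ are exactly the +1 and −1 eigenspaces of the induced map ᾱ on W; (d) ᾱ negates the symplectic form on W, so W = W⁺ ⊕ W⁻ is a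 complete polarization. -/
/-- An abstract Heisenberg `p`-group: a finite `p`-group of exponent `p` (`p` an odd
prime) whose commutator subgroup equals its center, the center being of order `p`. -/
def IsHeisenbergPGroup (p : ℕ) (H : Type*) [Group H] : Prop :=
  p.Prime ∧ Odd p ∧ Finite H ∧ IsPGroup p H ∧
    commutator H = Subgroup.center H ∧
    Nat.card (Subgroup.center H) = p ∧ ∀ h : H, h ^ p = 1

open scoped commutatorElement

/-- If `α` is an automorphism of order two of a Heisenberg `p`-group `H` which is
nontrivial on the center `Z`, then `Hᵅ⁺ = {h : α h = h}` and `Ĥᵅ⁻ = {h : α h = h⁻¹}`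
are subgroups with `Hᵅ⁺ ∩ Z = 1` and `Z ⊆ Ĥᵅ⁻`, their images in `W = H/Z` give a
direct sum decomposition into the `±1` eigenspaces of the induced involution `ᾱ`,
`ᾱ` negates the commutator form, and the two eigenspaces are totally isotropic
(a complete polarization). -/
theorem involution_polarization {p : ℕ} {H : Type*} [Group H]
    (hH : IsHeisenbergPGroup p H)
    (α : H ≃* H) (hα2 : ∀ h : H, α (α h) = h)
    (hαZ : ∃ z ∈ Subgroup.center H, α z ≠ z) :
    ∃ Hplus Hhat : Subgroup H,
      (Hplus : Set H) = {h : H | α h = h} ∧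
      (Hhat : Set H) = {h : H | α h = h⁻¹} ∧
      Hplus ⊓ Subgroup.center H = ⊥ ∧
      Subgroup.center H ≤ Hhat ∧
      (∀ h : H, ∃ a ∈ Hplus, ∃ b ∈ Hhat, ∃ z ∈ Subgroup.center H, h = a * b * z) ∧
      (∀ h : H, α h * h⁻¹ ∈ Subgroup.center H ↔
        ∃ a ∈ Hplus, ∃ z ∈ Subgroup.center H, h = a * z) ∧
      (∀ h : H, α h * h ∈ Subgroup.center H ↔ α h = h⁻¹) ∧
      (∀ h : H, α h * h⁻¹ ∈ Subgroup.center H → α h * h ∈ Subgroup.center H →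
        h ∈ Subgroup.center H) ∧
      (∀ h₁ h₂ : H, ⁅α h₁, α h₂⁆ = ⁅h₁, h₂⁆⁻¹) ∧
      (∀ a ∈ Hplus, ∀ b ∈ Hplus, ⁅a, b⁆ = 1) ∧
      (∀ a ∈ Hhat, ∀ b ∈ Hhat, ⁅a, b⁆ = 1) := by
  obtain ⟨hp, hodd, hfin, _, hcomm, hcardZ, hexp⟩ := hH
  obtain ⟨m, hm⟩ := hodd
  set q := m + 1 with hqdef
  have h2q : 2 * q = p + 1 := by omega
  have hpow2q : ∀ h : H, h ^ (2 * q) = h := by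
    intro h; rw [h2q, pow_succ, hexp, one_mul]
  have hcent : ∀ g h : H, ⁅g, h⁆ ∈ Subgroup.center H := by
    intro g h
    rw [← hcomm, commutator_def]
    exact Subgroup.commutator_mem_commutator (Subgroup.mem_top g) (Subgroup.mem_top h)
  have hZcomm : ∀ z ∈ Subgroup.center H, ∀ g : H, g * z = z * g :=
    fun z hz g => (Subgroup.mem_center_iff.mp hz g)
  have hmapZ : ∀ z ∈ Subgroup.center H, α z ∈ Subgroup.center H := by
    intro z hz
    rw [Subgroup.mem_center_iff]
    intro g
    have h1 : α.symm g * z = z * α.symm g := Subgroup.mem_center_iff.mp hz (α.symm g)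
    calc g * α z = α (α.symm g * z) := by rw [map_mul]; simp
      _ = α (z * α.symm g) := by rw [h1]
      _ = α z * g := by rw [map_mul]; simp
  have hsq : ∀ z : H, z ^ 2 = 1 → z = 1 := by
    intro z h1
    have h2 := hpow2q z
    rw [pow_mul, h1, one_pow] at h2
    exact h2.symm
  -- α is inversion on the center
  have hinv : ∀ z ∈ Subgroup.center H, α z = z⁻¹ := by
    obtain ⟨z₀, hz₀Z, hz₀ne⟩ := hαZ
    have hz₀1 : z₀ ≠ 1 := by rintro rfl; exact hz₀ne (map_one α)
    have hord : orderOf z₀ = p := by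
      have h1 : orderOf z₀ ∣ p := orderOf_dvd_of_pow_eq_one (hexp z₀)
      rcases (Nat.Prime.eq_one_or_self_of_dvd hp _ h1) with h | h
      · exact absurd (orderOf_eq_one_iff.mp h) hz₀1
      · exact h
    have hzp : Subgroup.zpowers z₀ = Subgroup.center H := by
      have hle : Subgroup.zpowers z₀ ≤ Subgroup.center H := by
        rw [Subgroup.zpowers_le]; exact hz₀Z
      have hcard : Nat.card (Subgroup.zpowers z₀) = p := by
        rw [Nat.card_zpowers, hord]
      apply SetLike.coe_injective
      apply Set.eq_of_subset_of_ncard_le hle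
      rw [← Nat.card_coe_set_eq, ← Nat.card_coe_set_eq]
      rw [show Nat.card ((Subgroup.zpowers z₀ : Set H)) = p from hcard,
        show Nat.card ((Subgroup.center H : Set H)) = p from hcardZ]
    have hmem : α z₀ ∈ Subgroup.zpowers z₀ := hzp ▸ hmapZ z₀ hz₀Z
    obtain ⟨k, hk0⟩ := hmem
    have hk : z₀ ^ k = α z₀ := hk0
    have hk2 : z₀ ^ (k * k) = z₀ := by
      have h1 := hα2 z₀
      rw [← hk, map_zpow, ← hk, ← zpow_mul] at h1
      exact h1
    have hdvd : (p : ℤ) ∣ k * k - 1 := by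
      rw [← hord]
      rw [orderOf_dvd_iff_zpow_eq_one, zpow_sub, hk2, zpow_one, mul_inv_cancel]
    have hpZ : Prime (p : ℤ) := Nat.prime_iff_prime_int.mp hp
    have hfact : (k * k - 1) = (k - 1) * (k + 1) := by ring
    rw [hfact] at hdvd
    have hz₀inv : α z₀ = z₀⁻¹ := by
      rcases hpZ.dvd_mul.mp hdvd with h | h
      · exfalso
        apply hz₀ne
        have : z₀ ^ (k - 1) = 1 := by
          rw [← orderOf_dvd_iff_zpow_eq_one, hord]; exact h
        rw [← hk]
        have := zpow_sub z₀ k 1 ▸ this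
        rw [zpow_one] at this
        calc z₀ ^ k = z₀ ^ k * z₀⁻¹ * z₀ := by group
          _ = z₀ := by rw [this, one_mul]
      · have h1 : z₀ ^ (k + 1) = 1 := by
          rw [← orderOf_dvd_iff_zpow_eq_one, hord]; exact h
        rw [zpow_add, zpow_one] at h1
        rw [← hk]
        exact eq_inv_of_mul_eq_one_left h1
    intro z hz
    have : z ∈ Subgroup.zpowers z₀ := hzp ▸ hz
    obtain ⟨n, hn0⟩ := this
    have hn : z₀ ^ n = z := hn0
    rw [← hn, map_zpow, hz₀inv]
    exact inv_zpow z₀ n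
  -- criterion for the hat subgroup
  have hhatA : ∀ h : H, α h * h ∈ Subgroup.center H → α h = h⁻¹ := by
    intro h hz
    have h1 : h * α h = α h * h := by
      calc h * α h = (h * (α h * h)) * h⁻¹ := by group
        _ = ((α h * h) * h) * h⁻¹ := by rw [hZcomm _ hz h]
        _ = α h * h := by group
    have h2 : α (α h * h) = α h * h := by
      rw [map_mul, hα2, h1]
    have h3 : (α h * h) ^ 2 = 1 := by
      have h4 := hinv _ hz
      rw [h4] at h2
      rw [pow_two]
      nth_rewrite 1 [← h2]
      rw [inv_mul_cancel]
    exact eq_inv_of_mul_eq_one_left (hsq _ h3)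
  -- the two subgroups
  refine ⟨{ carrier := {h : H | α h = h}
            mul_mem' := by intro a b ha hb; simp only [Set.mem_setOf_eq] at *
                           rw [map_mul, ha, hb]
            one_mem' := by simp
            inv_mem' := by intro a ha; simp only [Set.mem_setOf_eq] at *
                           rw [map_inv, ha] },
          { carrier := {h : H | α h = h⁻¹}
            mul_mem' := by
              intro a b ha hb; simp only [Set.mem_setOf_eq] at *
              apply hhatA
              have : α (a * b) * (a * b) = ⁅a⁻¹, b⁻¹⁆ := by
                rw [map_mul, ha, hb, commutatorElement_def]; group
              rw [this]; exact hcent _ _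
            one_mem' := by simp
            inv_mem' := by intro a ha; simp only [Set.mem_setOf_eq] at *
                           rw [map_inv, ha, inv_inv] },
          rfl, rfl, ?_, ?_, ?_, ?_, ?_, ?_, ?_, ?_, ?_⟩
  · -- Hplus ⊓ Z = ⊥
    rw [eq_bot_iff]
    rintro x ⟨hx1, hx2⟩
    have hx1' : α x = x := hx1
    have h1 : α x = x⁻¹ := hinv x hx2
    have hxx : x = x⁻¹ := hx1'.symm.trans h1
    have : x ^ 2 = 1 := by
      rw [pow_two]
      nth_rewrite 2 [hxx]
      rw [mul_inv_cancel]
    simpa [Subgroup.mem_bot] using hsq x this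
  · -- Z ≤ Hhat
    intro z hz
    simpa [Subgroup.mem_mk, Set.mem_setOf_eq] using hinv z hz
  · -- decomposition
    intro h
    have hπcomm : ∀ u v : H, ((u : H ⧸ Subgroup.center H)) * ((v : H ⧸ Subgroup.center H))
        = ((v : H ⧸ Subgroup.center H)) * ((u : H ⧸ Subgroup.center H)) := by
      intro u v
      rw [← QuotientGroup.mk_mul, ← QuotientGroup.mk_mul, QuotientGroup.eq]
      have he : (u * v)⁻¹ * (v * u) = ⁅v⁻¹, u⁻¹⁆ := by
        rw [commutatorElement_def]; group
      rw [he]; exact hcent _ _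
    set c := ⁅α h, h⁆ with hc
    have hcZ : c ∈ Subgroup.center H := hcent _ _
    set s := h * α h with hs
    have hαs : α s = s * c := by
      rw [hs, map_mul, hα2, hZcomm _ hcZ (h * α h), hc, commutatorElement_def]
      group
    set a := s ^ q * c ^ (q * q) with ha
    have hccomm : ∀ g : H, Commute g c := fun g => hZcomm c hcZ g
    have hαa : α a = a := by
      have h1 : α a = s ^ q * c ^ q * (c ^ (q * q))⁻¹ := by
        rw [ha, map_mul, map_pow, map_pow, hαs, hinv c hcZ, inv_pow, (hccomm s).mul_pow]
      have h2 : c ^ (q * q) * c ^ (q * q) = c ^ q := by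
        rw [← pow_add, show q * q + q * q = (2 * q) * q by ring, pow_mul, hpow2q c]
      rw [h1, ha, mul_assoc]
      congr 1
      rw [← h2]; group
    set t := h * (α h)⁻¹ with ht
    have hαt : α t = t⁻¹ := by
      rw [ht, map_mul, map_inv, hα2]
      group
    set b := t ^ q with hb
    have hαb : α b = b⁻¹ := by rw [hb, map_pow, hαt, inv_pow]
    have hπc : ((c : H) : H ⧸ Subgroup.center H) = 1 := (QuotientGroup.eq_one_iff c).mpr hcZ
    have hcomQ : Commute ((h : H ⧸ Subgroup.center H)) ((α h : H) : H ⧸ Subgroup.center H) :=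
      hπcomm h (α h)
    have hπab : ((a * b : H) : H ⧸ Subgroup.center H) = ((h : H) : H ⧸ Subgroup.center H) := by
      rw [ha, hb, hs, ht]
      rw [QuotientGroup.mk_mul, QuotientGroup.mk_mul, QuotientGroup.mk_pow,
        QuotientGroup.mk_pow, QuotientGroup.mk_pow, hπc, one_pow, mul_one,
        QuotientGroup.mk_mul, QuotientGroup.mk_mul, QuotientGroup.mk_inv]
      rw [hcomQ.mul_pow, hcomQ.inv_right.mul_pow, inv_pow]
      have h3 : ((α h : H) : H ⧸ Subgroup.center H) ^ q
          * ((h : H ⧸ Subgroup.center H) ^ q * (((α h : H) : H ⧸ Subgroup.center H) ^ q)⁻¹)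
          = (h : H ⧸ Subgroup.center H) ^ q := by
        rw [← mul_assoc, (hcomQ.symm.pow_pow q q).eq, mul_assoc, mul_inv_cancel, mul_one]
      rw [mul_assoc, h3, ← pow_add, ← two_mul, ← QuotientGroup.mk_pow, hpow2q]
    have hzZ : (a * b)⁻¹ * h ∈ Subgroup.center H := QuotientGroup.eq.mp hπab
    exact ⟨a, hαa, b, hαb, (a * b)⁻¹ * h, hzZ, by group⟩
  · -- plus criterion
    intro h
    constructor
    · intro hmem
      set c := α h * h⁻¹ with hc
      have hch : α h = c * h := by rw [hc]; group
      set a := h * c ^ q with ha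
      have hccq : c ^ q * c ^ q = c := by
        rw [← pow_add, ← two_mul]; exact hpow2q c
      have haplus : α a = a := by
        calc α a = α h * (α c) ^ q := by rw [ha, map_mul, map_pow]
          _ = c * h * (c ^ q)⁻¹ := by rw [hinv c hmem, hch, inv_pow]
          _ = h * (c * (c ^ q)⁻¹) := by rw [← hZcomm c hmem h, mul_assoc]
          _ = h * c ^ q := by
              congr 1
              exact mul_inv_eq_iff_eq_mul.mpr hccq.symm
      refine ⟨a, haplus, (c ^ q)⁻¹, (Subgroup.center H).inv_mem
        ((Subgroup.center H).pow_mem hmem q), by rw [ha]; group⟩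
    · rintro ⟨a, haplus, z, hz, rfl⟩
      simp only [Subgroup.mem_mk, Set.mem_setOf_eq] at haplus
      have hca : Commute a z := (hZcomm z hz a)
      have h1 : α (a * z) * (a * z)⁻¹ = z⁻¹ * z⁻¹ := by
        rw [map_mul, haplus, hinv z hz, mul_inv_rev]
        calc a * z⁻¹ * (z⁻¹ * a⁻¹) = z⁻¹ * a * (z⁻¹ * a⁻¹) := by rw [hca.inv_right.eq]
          _ = z⁻¹ * (a * z⁻¹) * a⁻¹ := by group
          _ = z⁻¹ * (z⁻¹ * a) * a⁻¹ := by rw [hca.inv_right.eq]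
          _ = z⁻¹ * z⁻¹ := by group
      rw [h1]
      exact (Subgroup.center H).mul_mem ((Subgroup.center H).inv_mem hz)
        ((Subgroup.center H).inv_mem hz)
  · -- hat criterion
    intro h
    constructor
    · exact hhatA h
    · intro h1; rw [h1, inv_mul_cancel]; exact (Subgroup.center H).one_mem
  · -- both ⇒ central
    intro h h1 h2
    have h3 : α h = h⁻¹ := hhatA h h2
    rw [h3] at h1
    have h4 : h * h ∈ Subgroup.center H := by
      have := (Subgroup.center H).inv_mem h1
      simpa using this
    have h5 : h ^ 2 ∈ Subgroup.center H := by rw [pow_two]; exact h4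
    have h6 : (h ^ 2) ^ q ∈ Subgroup.center H := (Subgroup.center H).pow_mem h5 q
    rw [← pow_mul, hpow2q] at h6
    exact h6
  · -- negation of the form
    intro h₁ h₂
    rw [← map_commutatorElement]
    exact hinv _ (hcent h₁ h₂)
  · -- Hplus abelian
    intro a ha b hb
    simp only [Subgroup.mem_mk, Set.mem_setOf_eq] at ha hb
    have h1 : α ⁅a, b⁆ = ⁅a, b⁆ := by rw [map_commutatorElement, ha, hb]
    have h2 : α ⁅a, b⁆ = ⁅a, b⁆⁻¹ := hinv _ (hcent a b)
    have h3 : ⁅a, b⁆ = ⁅a, b⁆⁻¹ := h1.symm.trans h2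
    apply hsq
    rw [pow_two]
    nth_rewrite 2 [h3]
    rw [mul_inv_cancel]
  · -- Hhat abelian
    intro a ha b hb
    simp only [Subgroup.mem_mk, Set.mem_setOf_eq] at ha hb
    have hab : α (a * b) = (a * b)⁻¹ := by
      apply hhatA
      have : α (a * b) * (a * b) = ⁅a⁻¹, b⁻¹⁆ := by
        rw [map_mul, ha, hb, commutatorElement_def]; group
      rw [this]; exact hcent _ _
    rw [map_mul, ha, hb, mul_inv_rev] at hab
    have hcommab : a * b = b * a := by
      have := congrArg (fun x => x⁻¹) hab
      simpa using this.symm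
    rw [commutatorElement_def, hcommab]
    group
end

section
/- Let p be odd, H a Heisenberg p-group with center Z, and α an automorphism of H of order two that is nontrivial on Z. With Hᵅ⁺ = {h : α(h) = h}, one has for every h ∈ H the double coset identity Hᵅ⁺ · α(h) · Hᵅ⁺ = Hᵅ⁺ · h⁻¹ · Hᵅ⁺. Consequently (by Gelfand's lemma) (H, Hᵅ⁺) is a Gelfand pair: for every irreducible representation ρ of H, the space of Hᵅ⁺-fixed vectors in ρ has dimension at most one. -/
private lemma heis_center_inv {p : ℕ} {H : Type*} [Group H]
    (hH : IsHeisenbergPGroup p H) (α : H ≃* H) (hα2 : ∀ h : H, α (α h) = h)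
    (hαZ : ∃ z ∈ Subgroup.center H, α z ≠ z) :
    ∀ z ∈ Subgroup.center H, α z = z⁻¹ := by
  obtain ⟨hp, hodd, hfin, _, hcomm, hcard, hexp⟩ := hH
  have hαc : ∀ z ∈ Subgroup.center H, α z ∈ Subgroup.center H := by
    intro z hz
    rw [Subgroup.mem_center_iff]
    intro g
    have h1 : g = α (α g) := (hα2 g).symm
    rw [h1, ← map_mul, ← map_mul,
      (Subgroup.mem_center_iff.mp hz (α g))]
  set F : Subgroup H :=
    { carrier := {z | z ∈ Subgroup.center H ∧ α z = z}
      one_mem' := ⟨Subgroup.one_mem _, map_one α⟩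
      mul_mem' := fun ha hb => ⟨Subgroup.mul_mem _ ha.1 hb.1, by
        rw [map_mul, ha.2, hb.2]⟩
      inv_mem' := fun ha => ⟨Subgroup.inv_mem _ ha.1, by
        rw [map_inv, ha.2]⟩ } with hF
  have hle : F ≤ Subgroup.center H := fun z hz => hz.1
  have hdvd : Nat.card F ∣ p := hcard ▸ Subgroup.card_dvd_of_le hle
  have hF1 : Nat.card F = 1 := by
    rcases (Nat.Prime.eq_one_or_self_of_dvd hp _ hdvd) with h1 | h1
    · exact h1
    · exfalso
      have : F = Subgroup.center H :=
        Subgroup.eq_of_le_of_card_ge hle (le_of_eq (hcard.trans h1.symm))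
      obtain ⟨z, hz, hz2⟩ := hαZ
      exact hz2 (((this ▸ hz) : z ∈ F).2)
  have hFbot : F = ⊥ := Subgroup.card_eq_one.mp hF1
  intro z hz
  have hmem : z * α z ∈ F := by
    refine ⟨Subgroup.mul_mem _ hz (hαc z hz), ?_⟩
    rw [map_mul, hα2, Subgroup.mem_center_iff.mp hz (α z)]
  rw [hFbot, Subgroup.mem_bot] at hmem
  exact (inv_eq_of_mul_eq_one_right hmem).symm

open scoped commutatorElement

private lemma heis_key {p : ℕ} {H : Type*} [Group H]
    (hH : IsHeisenbergPGroup p H) (α : H ≃* H) (hα2 : ∀ h : H, α (α h) = h)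
    (hαZ : ∃ z ∈ Subgroup.center H, α z ≠ z) :
    ∀ h : H, ∃ x : H, α x = x ∧ α h = x * h⁻¹ * x := by
  have hZ := heis_center_inv hH α hα2 hαZ
  obtain ⟨hp, hodd, hfin, _, hcm, hcard, hexp⟩ := hH
  obtain ⟨k, hk⟩ := hodd
  set T : ℤ := (k : ℤ) + 1 with hT
  have hpz : (p : ℤ) = 2 * (k : ℤ) + 1 := by exact_mod_cast hk
  intro h
  set c : H := α h * h * (α h)⁻¹ * h⁻¹ with hcdef
  have hc : c ∈ Subgroup.center H := by
    rw [← hcm]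
    have hcc : c = ⁅α h, h⁆ := by rw [commutatorElement_def]
    rw [hcc, commutator_def]
    exact Subgroup.commutator_mem_commutator (Subgroup.mem_top _) (Subgroup.mem_top _)
  have hmove : ∀ (g : H) (i : ℤ), c ^ i * g = g * c ^ i := fun g i =>
    (Subgroup.mem_center_iff.mp (Subgroup.zpow_mem _ hc i) g).symm
  have hczp : ∀ i : ℤ, c ^ ((p : ℤ) * i) = 1 := by
    intro i
    rw [zpow_mul, zpow_natCast, hexp c, one_zpow]
  have hcoll : ∀ i j q : ℤ, i = (p : ℤ) * q + j → c ^ i = c ^ j := by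
    intro i j q hij
    rw [hij, zpow_add, hczp, one_mul]
  have hαc : α c = c⁻¹ := hZ c hc
  set a : H := h * α h with hadef
  have hαa : α a = c * a := by
    rw [hadef, map_mul, hα2, hcdef]
    group
  have hap : ∀ i : ℤ, a ^ ((p : ℤ) * i) = 1 := by
    intro i
    rw [zpow_mul, zpow_natCast, hexp a, one_zpow]
  set x : H := a ^ T * c ^ (T * T) with hxdef
  have hx : α x = x := by
    have hCca : Commute c a := (Subgroup.mem_center_iff.mp hc a).symm
    have h1 : (c * a) ^ T = c ^ T * a ^ T := Commute.mul_zpow hCca T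
    rw [hxdef, map_mul, map_zpow, map_zpow, hαa, hαc, h1, inv_zpow, ← zpow_neg]
    calc c ^ T * a ^ T * c ^ (-(T * T))
        = a ^ T * c ^ T * c ^ (-(T * T)) := by rw [hmove (a ^ T) T]
      _ = a ^ T * (c ^ T * c ^ (-(T * T))) := by rw [mul_assoc]
      _ = a ^ T * c ^ (T + -(T * T)) := by rw [← zpow_add c]
      _ = a ^ T * c ^ (T * T) := by
          congr 1
          apply hcoll _ _ (-T)
          rw [hpz, hT]; ring
  -- m and z₀
  set m : H := x⁻¹ * h with hmdef
  have hαm0 : α m = x⁻¹ * α h := by rw [hmdef, map_mul, map_inv, hx]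
  have hαh : α h = h⁻¹ * a := by rw [hadef]; group
  set e : H := h * a ^ (-T) * h⁻¹ * a ^ T with hedef
  have he : e ∈ Subgroup.center H := by
    rw [← hcm]
    have hee : e = ⁅h, a ^ (-T)⁆ := by
      rw [commutatorElement_def, hedef, zpow_neg, inv_inv]
    rw [hee, commutator_def]
    exact Subgroup.commutator_mem_commutator (Subgroup.mem_top _) (Subgroup.mem_top _)
  have he2 : ∀ g1 g2 : H, g1 * (e * g2) = e * (g1 * g2) := by
    intro g1 g2
    rw [← mul_assoc, (Subgroup.mem_center_iff.mp he g1), mul_assoc]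
  set C : H := c ^ (-(T * T)) with hCdef
  have hC2 : ∀ g1 g2 : H, g1 * (C * g2) = C * (g1 * g2) := by
    intro g1 g2
    rw [← mul_assoc, hCdef, ← hmove g1 (-(T*T)), mul_assoc]
  have hxinv : x⁻¹ = C * a ^ (-T) := by
    rw [hxdef, mul_inv_rev, hCdef, ← zpow_neg, ← zpow_neg, hmove]
  have hhah : h * a ^ (-T) * h⁻¹ = e * a ^ (-T) := by
    rw [hedef]; group
  set z₀ : H := m * α m with hz₀def
  have hz₀eq : z₀ = C * C * e := by
    calc z₀ = x⁻¹ * h * (x⁻¹ * α h) := by rw [hz₀def, hαm0, hmdef]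
      _ = (C * a ^ (-T)) * (h * (C * (a ^ (-T) * (h⁻¹ * a)))) := by
          rw [hxinv, hαh]; group
      _ = (C * a ^ (-T)) * (C * (h * (a ^ (-T) * (h⁻¹ * a)))) := by
          rw [hC2 h (a ^ (-T) * (h⁻¹ * a))]
      _ = C * (a ^ (-T) * (C * (h * (a ^ (-T) * (h⁻¹ * a))))) := by group
      _ = C * (C * (a ^ (-T) * (h * (a ^ (-T) * (h⁻¹ * a))))) := by
          rw [hC2 (a ^ (-T)) (h * (a ^ (-T) * (h⁻¹ * a)))]
      _ = C * C * (a ^ (-T) * ((h * a ^ (-T) * h⁻¹) * a)) := by group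
      _ = C * C * (a ^ (-T) * ((e * a ^ (-T)) * a)) := by rw [hhah]
      _ = C * C * (a ^ (-T) * (e * (a ^ (-T) * a))) := by group
      _ = C * C * (e * (a ^ (-T) * (a ^ (-T) * a))) := by
          rw [he2 (a ^ (-T)) (a ^ (-T) * a)]
      _ = C * C * (e * a ^ (-T + (-T + 1))) := by
          rw [zpow_add a (-T) (-T + 1), zpow_add a (-T) 1, zpow_one]
      _ = C * C * (e * a ^ ((p : ℤ) * (-1))) := by
          have : -T + (-T + 1) = (p : ℤ) * (-1) := by rw [hpz, hT]; ring
          rw [this]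
      _ = C * C * e := by rw [hap, mul_one]
  have hz₀c : z₀ ∈ Subgroup.center H := by
    rw [hz₀eq, hCdef]
    exact Subgroup.mul_mem _
      (Subgroup.mul_mem _ (Subgroup.zpow_mem _ hc _) (Subgroup.zpow_mem _ hc _)) he
  have hαm : α m = m⁻¹ * z₀ := by rw [hz₀def]; group
  have hz₀1 : z₀ = 1 := by
    have h1 : α z₀ = z₀⁻¹ := hZ z₀ hz₀c
    have h2 : α z₀ = α m * m := by rw [hz₀def, map_mul, hα2]
    have hsq : z₀ * z₀ = 1 := by
      have h3 : m⁻¹ * z₀ * m = z₀⁻¹ := by rw [← hαm, ← h2, h1]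
      have h4 : m⁻¹ * z₀ * m = z₀ := by
        rw [mul_assoc, ← Subgroup.mem_center_iff.mp hz₀c m]; group
      rw [h4] at h3
      rw [mul_eq_one_iff_eq_inv]
      exact h3
    have h5 : z₀ ^ p = 1 := hexp z₀
    have h6 : z₀ ^ p = z₀ := by
      rw [hk, pow_succ, pow_mul, pow_two, hsq, one_pow, one_mul]
    rw [← h6, h5]
  refine ⟨x, hx, ?_⟩
  have hαm' : α m = m⁻¹ := by rw [hαm, hz₀1, mul_one]
  have hh : α h = x * m⁻¹ := by
    have hxm : h = x * m := by rw [hmdef]; group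
    rw [hxm, map_mul, hx, hαm']
  rw [hh, hmdef]
  group

private lemma heis_gelfand {H : Type*} [Group H] [Finite H]
    (α : H ≃* H)
    (hkey : ∀ h : H, ∃ x : H, α x = x ∧ α h = x * h⁻¹ * x)
    (V : Type) [AddCommGroup V] [Module ℂ V] (ρ : Representation ℂ H V)
    (hirr : ∀ U : Submodule ℂ V, (∀ h : H, ∀ v ∈ U, ρ h v ∈ U) → U = ⊥ ∨ U = ⊤)
    (v w : V) (hv : ∀ h : H, α h = h → ρ h v = v) (hw : ∀ h : H, α h = h → ρ h w = w) :
    ∃ a b : ℂ, (a ≠ 0 ∨ b ≠ 0) ∧ a • v + b • w = 0 := by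
  classical
  by_cases hv0 : v = 0
  · exact ⟨1, 0, Or.inl one_ne_zero, by simp [hv0]⟩
  have _inst := Fintype.ofFinite H
  set S : Finset H := Finset.univ.filter (fun h => α h = h) with hSdef
  have hmemS : ∀ {h : H}, h ∈ S ↔ α h = h := by
    intro h; simp [hSdef]
  have h1S : (1 : H) ∈ S := hmemS.mpr (map_one α)
  have hmulS : ∀ {g h : H}, g ∈ S → h ∈ S → g * h ∈ S := by
    intro g h hg hh
    exact hmemS.mpr (by rw [map_mul, hmemS.mp hg, hmemS.mp hh])
  have hinvS : ∀ {h : H}, h ∈ S → h⁻¹ ∈ S := by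
    intro h hh
    exact hmemS.mpr (by rw [map_inv, hmemS.mp hh])
  set n : ℂ := (S.card : ℂ) with hn
  have hn0 : n ≠ 0 := by
    rw [hn]
    exact_mod_cast Finset.card_ne_zero_of_mem h1S
  set P : V →ₗ[ℂ] V := n⁻¹ • (∑ k ∈ S, ρ k) with hPdef
  have hPapp : ∀ u : V, P u = n⁻¹ • ∑ k ∈ S, ρ k u := by
    intro u
    simp [hPdef, LinearMap.sum_apply]
  have f1 : ∀ k ∈ S, ∀ u : V, ρ k (P u) = P u := by
    intro k hk u
    rw [hPapp u, map_smul, map_sum]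
    congr 1
    refine Finset.sum_nbij' (fun j => k * j) (fun j => k⁻¹ * j)
      (fun j hj => hmulS hk hj) (fun j hj => hmulS (hinvS hk) hj)
      (fun j _ => by group) (fun j _ => by group) ?_
    intro j _
    show ρ k (ρ j u) = ρ (k * j) u
    rw [map_mul]
    rfl
  have f2 : ∀ k ∈ S, ∀ u : V, P (ρ k u) = P u := by
    intro k hk u
    rw [hPapp (ρ k u), hPapp u]
    congr 1
    refine Finset.sum_nbij' (fun j => j * k) (fun j => j * k⁻¹)
      (fun j hj => hmulS hj hk) (fun j hj => hmulS hj (hinvS hk))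
      (fun j _ => by group) (fun j _ => by group) ?_
    intro j _
    show ρ j (ρ k u) = ρ (j * k) u
    rw [map_mul]
    rfl
  have f3 : ∀ u : V, (∀ k ∈ S, ρ k u = u) → P u = u := by
    intro u hu
    rw [hPapp u, Finset.sum_congr rfl hu, Finset.sum_const,
      ← Nat.cast_smul_eq_nsmul ℂ, smul_smul, ← hn, inv_mul_cancel₀ hn0, one_smul]
  have hPP : ∀ u : V, P (P u) = P u := fun u => f3 (P u) (fun k hk => f1 k hk u)
  set F : Submodule ℂ V :=
    { carrier := {u : V | ∀ k ∈ S, ρ k u = u}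
      add_mem' := fun ha hb k hk => by rw [map_add, ha k hk, hb k hk]
      zero_mem' := fun k _ => map_zero _
      smul_mem' := fun a u hu k hk => by rw [map_smul, hu k hk] } with hFdef
  have hvF : v ∈ F := fun k hk => hv k (hmemS.mp hk)
  have hwF : w ∈ F := fun k hk => hw k (hmemS.mp hk)
  have hPF : ∀ u : V, P u ∈ F := fun u k hk => f1 k hk u
  have hFP : ∀ u ∈ F, P u = u := fun u hu => f3 u hu
  set T : H → (V →ₗ[ℂ] V) := fun h => P ∘ₗ ((ρ h) ∘ₗ P) with hTdef
  have hTapp : ∀ (h : H) (u : V), T h u = P (ρ h (P u)) := fun h u => rfl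
  have hTF : ∀ (h : H) (u : V), T h u ∈ F := fun h u => hPF _
  have hTbi : ∀ (h x y : H), x ∈ S → y ∈ S → ∀ u : V, T (x * h * y) u = T h u := by
    intro h x y hx hy u
    rw [hTapp, hTapp]
    have e1 : ρ (x * h * y) (P u) = ρ x (ρ h (ρ y (P u))) := by
      rw [map_mul, map_mul]; rfl
    rw [e1, f1 y hy, f2 x hx]
  have hTα : ∀ (h : H) (u : V), T (α h) u = T h⁻¹ u := by
    intro h u
    obtain ⟨x, hx, heq⟩ := hkey h
    rw [heq]
    exact hTbi h⁻¹ x x (hmemS.mpr hx) (hmemS.mpr hx) u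
  have hTT : ∀ (g h : H) (u : V), T g (T h u) = n⁻¹ • ∑ k ∈ S, T (g * k * h) u := by
    intro g h u
    have e0 : P (T h u) = T h u := hPP _
    rw [hTapp g (T h u), e0, hTapp h u, hPapp (ρ h (P u)), map_smul, map_sum,
      map_smul, map_sum]
    congr 1
    refine Finset.sum_congr rfl ?_
    intro k _
    rw [hTapp (g * k * h) u]
    congr 1
    rw [map_mul, map_mul]
    rfl
  have hTcomm : ∀ (g h : H) (u : V), T g (T h u) = T h (T g u) := by
    intro g h u
    obtain ⟨x, hxf, hxe⟩ := hkey h⁻¹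
    obtain ⟨y, hyf, hye⟩ := hkey g⁻¹
    have hxS : x ∈ S := hmemS.mpr hxf
    have hyS : y ∈ S := hmemS.mpr hyf
    rw [hTT g h u, hTT h g u]
    congr 1
    refine Finset.sum_nbij' (fun j => x * j⁻¹ * y) (fun j => y * j⁻¹ * x)
      (fun j hj => hmulS (hmulS hxS (hinvS hj)) hyS)
      (fun j hj => hmulS (hmulS hyS (hinvS hj)) hxS)
      (fun j _ => by group) (fun j _ => by group) ?_
    intro k hk
    show T (g * k * h) u = T (h * (x * k⁻¹ * y) * g) u
    have e1 : T (g * k * h) u = T (α (h⁻¹ * k⁻¹ * g⁻¹)) u := by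
      rw [hTα (h⁻¹ * k⁻¹ * g⁻¹) u]
      congr 2
      group
    have e2 : α (h⁻¹ * k⁻¹ * g⁻¹) = (x * h * x) * k⁻¹ * (y * g * y) := by
      rw [map_mul, map_mul, map_inv α k, hmemS.mp hk, hxe, hye, inv_inv, inv_inv]
    have e3 : (x * h * x) * k⁻¹ * (y * g * y) = x * (h * (x * k⁻¹ * y) * g) * y := by
      group
    rw [e1, e2, e3]
    exact hTbi (h * (x * k⁻¹ * y) * g) x y hxS hyS u
  have hspan : ∀ u : V, u ∈ F → u ≠ 0 →
      ∀ f ∈ F, f ∈ Submodule.span ℂ (Set.range fun h : H => T h u) := by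
    intro u huF hu0 f hf
    set M : Submodule ℂ V := Submodule.span ℂ (Set.range fun h : H => ρ h u) with hMdef
    have hMinv : ∀ g : H, ∀ y ∈ M, ρ g y ∈ M := by
      intro g y hy
      have hmap : Submodule.map (ρ g) M ≤ M := by
        rw [hMdef, Submodule.map_span, Submodule.span_le]
        rintro _ ⟨_, ⟨h0, rfl⟩, rfl⟩
        apply Submodule.subset_span
        refine ⟨g * h0, ?_⟩
        show ρ (g * h0) u = ρ g (ρ h0 u)
        rw [map_mul]
        rfl
      exact hmap ⟨y, hy, rfl⟩
    have huM : u ∈ M := by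
      apply Submodule.subset_span
      refine ⟨1, ?_⟩
      show ρ (1 : H) u = u
      rw [map_one]
      rfl
    have hMtop : M = ⊤ := by
      rcases hirr M hMinv with hb | ht
      · rw [hb, Submodule.mem_bot] at huM
        exact absurd huM hu0
      · exact ht
    have hfM : f ∈ M := hMtop ▸ Submodule.mem_top
    have hmap : Submodule.map P M ≤ Submodule.span ℂ (Set.range fun h : H => T h u) := by
      rw [hMdef, Submodule.map_span, Submodule.span_le]
      rintro _ ⟨_, ⟨h0, rfl⟩, rfl⟩
      apply Submodule.subset_span
      refine ⟨h0, ?_⟩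
      show T h0 u = P (ρ h0 u)
      rw [hTapp, hFP u huF]
    have : P f ∈ Submodule.span ℂ (Set.range fun h : H => T h u) := hmap ⟨f, hfM, rfl⟩
    rwa [hFP f hf] at this
  have hFeq : F = Submodule.span ℂ (Set.range fun h : H => T h v) := by
    apply le_antisymm
    · intro f hf
      exact hspan v hvF hv0 f hf
    · rw [Submodule.span_le]
      rintro _ ⟨h0, rfl⟩
      exact hTF h0 v
  haveI hfd : FiniteDimensional ℂ F := by
    rw [hFeq]
    exact FiniteDimensional.span_of_finite ℂ (Set.finite_range _)
  haveI hnt : Nontrivial F := nontrivial_of_ne ⟨v, hvF⟩ 0 (by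
    intro hEq
    exact hv0 (by simpa using congrArg Subtype.val hEq))
  have hscal : ∀ h : H, ∃ μ : ℂ, T h v = μ • v := by
    intro h
    have hres : ∀ u ∈ F, T h u ∈ F := fun u _ => hTF h u
    set A : Module.End ℂ F := (T h).restrict hres with hAdef
    obtain ⟨μ, hμ⟩ := Module.End.exists_eigenvalue A
    obtain ⟨u₀, hu₀⟩ := hμ.exists_hasEigenvector
    have heig : T h (u₀ : V) = μ • (u₀ : V) := by
      have h1 := Module.End.mem_eigenspace_iff.mp hu₀.1
      have h2 := congrArg (Subtype.val) h1
      simpa [hAdef, LinearMap.restrict_apply] using h2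
    have hu0ne : (u₀ : V) ≠ 0 := fun h0 => hu₀.2 (Subtype.ext h0)
    set E : Submodule ℂ V :=
      { carrier := {y : V | y ∈ F ∧ T h y = μ • y}
        add_mem' := fun ha hb => ⟨F.add_mem ha.1 hb.1, by rw [map_add, ha.2, hb.2, smul_add]⟩
        zero_mem' := ⟨F.zero_mem, by rw [map_zero, smul_zero]⟩
        smul_mem' := fun a y hy => ⟨F.smul_mem a hy.1, by
          rw [map_smul, hy.2]
          exact smul_comm a μ y⟩ } with hEdef
    have hu₀E : (u₀ : V) ∈ E := ⟨u₀.2, heig⟩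
    have hTE : ∀ g : H, ∀ y ∈ E, T g y ∈ E := by
      intro g y hy
      exact ⟨hTF g y, by rw [hTcomm h g y, hy.2, map_smul]⟩
    have hvE : v ∈ E := by
      have h1 : v ∈ Submodule.span ℂ (Set.range fun g : H => T g (u₀ : V)) :=
        hspan (u₀ : V) u₀.2 hu0ne v hvF
      have hle : Submodule.span ℂ (Set.range fun g : H => T g (u₀ : V)) ≤ E := by
        rw [Submodule.span_le]
        rintro _ ⟨g, rfl⟩
        exact hTE g _ hu₀E
      exact hle h1
    exact ⟨μ, hvE.2⟩
  have hwspan : w ∈ Submodule.span ℂ ({v} : Set V) := by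
    have h1 : w ∈ Submodule.span ℂ (Set.range fun h : H => T h v) := hspan v hvF hv0 w hwF
    have h2 : Submodule.span ℂ (Set.range fun h : H => T h v) ≤ Submodule.span ℂ {v} := by
      rw [Submodule.span_le]
      rintro _ ⟨h0, rfl⟩
      obtain ⟨μ, hμ⟩ := hscal h0
      rw [SetLike.mem_coe, Submodule.mem_span_singleton]
      exact ⟨μ, hμ.symm⟩
    exact h2 h1
  obtain ⟨cc, hcc⟩ := Submodule.mem_span_singleton.mp hwspan
  refine ⟨cc, -1, Or.inr (by norm_num), ?_⟩
  rw [← hcc]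
  simp

/-- If `α` is an order-two automorphism of a Heisenberg `p`-group `H` which is
nontrivial on the center, then for every `h ∈ H` one has the double coset identity
`Hᵅ⁺ · α(h) · Hᵅ⁺ = Hᵅ⁺ · h⁻¹ · Hᵅ⁺`, and consequently `(H, Hᵅ⁺)` is a Gelfand pair:
for every irreducible representation `ρ` of `H`, the space of `Hᵅ⁺`-fixed vectors has
dimension at most one. -/
theorem heisenberg_gelfand_pair {p : ℕ} {H : Type*} [Group H]
    (hH : IsHeisenbergPGroup p H)
    (α : H ≃* H) (hα2 : ∀ h : H, α (α h) = h)
    (hαZ : ∃ z ∈ Subgroup.center H, α z ≠ z) :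
    (∀ h : H,
      {g : H | ∃ x y : H, α x = x ∧ α y = y ∧ g = x * α h * y} =
        {g : H | ∃ x y : H, α x = x ∧ α y = y ∧ g = x * h⁻¹ * y}) ∧
    (∀ (V : Type) [AddCommGroup V] [Module ℂ V] (ρ : Representation ℂ H V),
      (∀ U : Submodule ℂ V, (∀ h : H, ∀ v ∈ U, ρ h v ∈ U) → U = ⊥ ∨ U = ⊤) →
      ∀ v w : V, (∀ h : H, α h = h → ρ h v = v) → (∀ h : H, α h = h → ρ h w = w) →
        ∃ a b : ℂ, (a ≠ 0 ∨ b ≠ 0) ∧ a • v + b • w = 0) := by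
  have hkey := heis_key hH α hα2 hαZ
  constructor
  · intro h
    obtain ⟨x, hx, heq⟩ := hkey h
    ext g
    simp only [Set.mem_setOf_eq]
    constructor
    · rintro ⟨x₁, y₁, hx₁, hy₁, rfl⟩
      refine ⟨x₁ * x, x * y₁, ?_, ?_, ?_⟩
      · rw [map_mul, hx₁, hx]
      · rw [map_mul, hx, hy₁]
      · rw [heq]; group
    · rintro ⟨x₁, y₁, hx₁, hy₁, rfl⟩
      refine ⟨x₁ * x⁻¹, x⁻¹ * y₁, ?_, ?_, ?_⟩
      · rw [map_mul, map_inv, hx₁, hx]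
      · rw [map_mul, map_inv, hx, hy₁]
      · have hinv : h⁻¹ = x⁻¹ * α h * x⁻¹ := by rw [heq]; group
        rw [hinv]; group
  · intro V _ _ ρ hirr v w hv hw
    have : Finite H := hH.2.2.1
    exact heis_gelfand α hkey V ρ hirr v w hv hw
end

section
/- Let H be a Heisenberg p-group (p odd) with center Z, and let (H⁺, H⁻) be a split polarization of H: subgroups with H⁺ ∩ Z = H⁻ ∩ Z = {1} whose images W⁺, W⁻ in W = H/Z form a complete polarization W = W⁺ ⊕ W⁻. Then the map ν(w₊ w₋ z) = (w̄₊ + w̄₋, z·[w₊, w₋]^{(p+1)/2}), for w₊ ∈ H⁺, w₋ ∈ H⁻, z ∈ Z, is a well-defined special isomorphism H → W^♯. Moreover it is the unique special isomorphism ν′ with ν′(H⁺) ⊆ W × {1} and ν′(H⁻) ⊆ W × {1}. -/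
open scoped commutatorElement

/-- A special isomorphism `ν : H → W^♯`, encoded by `μ : H → Z` via `ν h = (hZ, μ h)`. -/
structure SpecialIso (p : ℕ) (H : Type*) [Group H] where
  toFun : H → H
  mem_center : ∀ h : H, toFun h ∈ Subgroup.center H
  center_fix : ∀ h ∈ Subgroup.center H, toFun h = h
  mul_eq : ∀ h₁ h₂ : H, toFun (h₁ * h₂) = toFun h₁ * toFun h₂ * ⁅h₁, h₂⁆ ^ ((p + 1) / 2)

section Aux

variable {p : ℕ} {H : Type*} [Group H]

lemma SpecialIso.ext' {μ₁ μ₂ : SpecialIso p H} (h : μ₁.toFun = μ₂.toFun) : μ₁ = μ₂ := by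
  cases μ₁; cases μ₂; cases h; rfl

lemma heis_comm_central (hH : IsHeisenbergPGroup p H) (a b : H) :
    ⁅a, b⁆ ∈ Subgroup.center H := by
  rw [← hH.2.2.2.2.1, commutator_def]
  exact Subgroup.commutator_mem_commutator (Subgroup.mem_top a) (Subgroup.mem_top b)

lemma central_comm {z : H} (hz : z ∈ Subgroup.center H) (x : H) : z * x = x * z :=
  (Subgroup.mem_center_iff.mp hz x).symm

lemma central_bubble {z : H} (hz : z ∈ Subgroup.center H) (x y : H) :
    z * (x * y) = x * (z * y) := by
  rw [← mul_assoc, central_comm hz x, mul_assoc]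

lemma comm_central_eq_one_right {z : H} (hz : z ∈ Subgroup.center H) (x : H) :
    ⁅x, z⁆ = 1 :=
  commutatorElement_eq_one_iff_mul_comm.mpr (Subgroup.mem_center_iff.mp hz x)

lemma comm_central_eq_one_left {z : H} (hz : z ∈ Subgroup.center H) (x : H) :
    ⁅z, x⁆ = 1 :=
  commutatorElement_eq_one_iff_mul_comm.mpr (Subgroup.mem_center_iff.mp hz x).symm

/-- pure group identity -/
lemma mul_eq_comm_mul (a b : H) : a * b = ⁅a, b⁆ * (b * a) := by
  group

lemma comm_mul_left (hH : IsHeisenbergPGroup p H) (a b c : H) :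
    ⁅a * b, c⁆ = ⁅a, c⁆ * ⁅b, c⁆ := by
  have hc := central_comm (heis_comm_central hH b c)
  calc ⁅a * b, c⁆ = a * ⁅b, c⁆ * (c * a⁻¹ * c⁻¹) := by group
    _ = ⁅b, c⁆ * a * (c * a⁻¹ * c⁻¹) := by rw [← hc a]
    _ = ⁅b, c⁆ * ⁅a, c⁆ := by group
    _ = ⁅a, c⁆ * ⁅b, c⁆ := hc ⁅a, c⁆

lemma comm_mul_right (hH : IsHeisenbergPGroup p H) (a b c : H) :
    ⁅a, b * c⁆ = ⁅a, b⁆ * ⁅a, c⁆ := by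
  rw [← commutatorElement_inv, comm_mul_left hH, mul_inv_rev,
    commutatorElement_inv, commutatorElement_inv]
  exact central_comm (heis_comm_central hH a c) ⁅a, b⁆

/-- the commutative-group computation at the heart of the multiplicativity of `μ` -/
lemma key_commgroup {G : Type*} [CommGroup G] (k : ℕ) (ζ₁ ζ₂ γ α β δ : G)
    (h2 : γ ^ k * γ ^ k = γ) :
    ζ₁ * ζ₂ * γ * (α * β * (γ⁻¹ * δ)) ^ k =
      ζ₁ * α ^ k * (ζ₂ * δ ^ k) * (β * γ) ^ k := by
  have h3 : γ * (γ ^ k)⁻¹ = γ ^ k := by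
    rw [mul_inv_eq_iff_eq_mul]; exact h2.symm
  calc ζ₁ * ζ₂ * γ * (α * β * (γ⁻¹ * δ)) ^ k
      = γ * (γ ^ k)⁻¹ * (ζ₁ * ζ₂ * (α ^ k * (β ^ k * δ ^ k))) := by
        rw [mul_pow, mul_pow, mul_pow, inv_pow]
        simp only [mul_comm, mul_left_comm, mul_assoc]
    _ = γ ^ k * (ζ₁ * ζ₂ * (α ^ k * (β ^ k * δ ^ k))) := by rw [h3]
    _ = ζ₁ * α ^ k * (ζ₂ * δ ^ k) * (β * γ) ^ k := by
        rw [mul_pow]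
        simp only [mul_comm, mul_left_comm, mul_assoc]

end Aux

/-- A split polarization `(H⁺, H⁻)` of a Heisenberg `p`-group `H` determines a special
isomorphism `ν (w₊ w₋ z) = (w̄₊ + w̄₋, z·[w₊,w₋]^{(p+1)/2})` (here encoded by
`μ (w₊ w₋ z) = z·[w₊,w₋]^{(p+1)/2}`), and it is the unique special isomorphism
sending both `H⁺` and `H⁻` into `W × {1}`. -/
theorem split_polarization_special_isomorphism {p : ℕ} {H : Type*} [Group H]
    (hH : IsHeisenbergPGroup p H) (Hp Hm : Subgroup H)
    (hpab : ∀ a ∈ Hp, ∀ b ∈ Hp, a * b = b * a)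
    (hmab : ∀ a ∈ Hm, ∀ b ∈ Hm, a * b = b * a)
    (hpz : Hp ⊓ Subgroup.center H = ⊥)
    (hmz : Hm ⊓ Subgroup.center H = ⊥)
    (hfact : ∀ h : H, ∃! t : Hp × Hm × Subgroup.center H,
      h = (t.1 : H) * (t.2.1 : H) * (t.2.2 : H)) :
    ∃ μ : SpecialIso p H,
      (∀ wp ∈ Hp, ∀ wm ∈ Hm, ∀ z ∈ Subgroup.center H,
        μ.toFun (wp * wm * z) = z * ⁅wp, wm⁆ ^ ((p + 1) / 2)) ∧
      (∀ μ' : SpecialIso p H, (∀ h ∈ Hp, μ'.toFun h = 1) →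
        (∀ h ∈ Hm, μ'.toFun h = 1) → μ' = μ) := by
  classical
  set Z := Subgroup.center H with hZ
  set k := (p + 1) / 2 with hk
  have hkk : k + k = p + 1 := by
    obtain ⟨r, hr⟩ := hH.2.1.add_one
    omega
  have hexp : ∀ h : H, h ^ p = 1 := hH.2.2.2.2.2.2
  -- the chosen factorization
  let T : H → Hp × Hm × Z := fun h => (hfact h).choose
  have hT : ∀ h : H, h = ((T h).1 : H) * ((T h).2.1 : H) * ((T h).2.2 : H) :=
    fun h => (hfact h).choose_spec.1
  have hTu : ∀ (h : H) (t : Hp × Hm × Z),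
      h = (t.1 : H) * (t.2.1 : H) * (t.2.2 : H) → T h = t :=
    fun h t ht => ((hfact h).choose_spec.2 t ht).symm
  -- the candidate map
  let f : H → H := fun h => ((T h).2.2 : H) * ⁅((T h).1 : H), ((T h).2.1 : H)⁆ ^ k
  have hfval : ∀ wp ∈ Hp, ∀ wm ∈ Hm, ∀ z ∈ Z,
      f (wp * wm * z) = z * ⁅wp, wm⁆ ^ k := by
    intro wp hwp wm hwm z hz
    have : T (wp * wm * z) = (⟨wp, hwp⟩, ⟨wm, hwm⟩, ⟨z, hz⟩) :=
      hTu _ _ rfl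
    simp only [f, this]
  have hfcen : ∀ h : H, f h ∈ Z := fun h =>
    Z.mul_mem (T h).2.2.2 (Z.pow_mem (heis_comm_central hH _ _) k)
  have hffix : ∀ h ∈ Z, f h = h := by
    intro h hz
    have := hfval 1 Hp.one_mem 1 Hm.one_mem h hz
    simpa using this
  -- the key multiplicativity computation
  have hfmul : ∀ h₁ h₂ : H, f (h₁ * h₂) = f h₁ * f h₂ * ⁅h₁, h₂⁆ ^ k := by
    intro h₁ h₂
    set a₁ := ((T h₁).1 : H) with ha₁
    set b₁ := ((T h₁).2.1 : H) with hb₁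
    set z₁ := ((T h₁).2.2 : H) with hz₁'
    set a₂ := ((T h₂).1 : H) with ha₂
    set b₂ := ((T h₂).2.1 : H) with hb₂
    set z₂ := ((T h₂).2.2 : H) with hz₂'
    have e₁ : h₁ = a₁ * b₁ * z₁ := hT h₁
    have e₂ : h₂ = a₂ * b₂ * z₂ := hT h₂
    have hz₁ : z₁ ∈ Z := (T h₁).2.2.2
    have hz₂ : z₂ ∈ Z := (T h₂).2.2.2
    set c := ⁅b₁, a₂⁆ with hc
    have hC : c ∈ Z := heis_comm_central hH b₁ a₂
    -- the factorization of the product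
    have hswap : ∀ X : H, b₁ * (a₂ * X) = a₂ * (b₁ * (c * X)) := by
      intro X
      have h1 : b₁ * a₂ = a₂ * b₁ * c := by
        rw [mul_eq_comm_mul b₁ a₂, central_comm hC, mul_assoc]
      rw [← mul_assoc, h1, mul_assoc, mul_assoc]
    have eprod : h₁ * h₂ = (a₁ * a₂) * (b₁ * b₂) * (z₁ * z₂ * c) := by
      conv_lhs => rw [e₁, e₂]
      simp only [mul_assoc]
      rw [central_bubble hz₁ a₂, central_bubble hz₁ b₂, hswap,
        central_bubble hC b₂, central_bubble hC z₁, central_comm hC z₂]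
    -- expanding the two commutators
    have e11 : ⁅a₁, a₂⁆ = 1 :=
      commutatorElement_eq_one_iff_mul_comm.mpr
        (hpab a₁ (T h₁).1.2 a₂ (T h₂).1.2)
    have e22 : ⁅b₁, b₂⁆ = 1 :=
      commutatorElement_eq_one_iff_mul_comm.mpr
        (hmab b₁ (T h₁).2.1.2 b₂ (T h₂).2.1.2)
    have hcommexp : ⁅a₁ * a₂, b₁ * b₂⁆ = ⁅a₁, b₁⁆ * ⁅a₁, b₂⁆ * (c⁻¹ * ⁅a₂, b₂⁆) := by
      rw [comm_mul_left hH, comm_mul_right hH, comm_mul_right hH, hc,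
        commutatorElement_inv, mul_assoc]
    have hcomm12 : ⁅h₁, h₂⁆ = ⁅a₁, b₂⁆ * c := by
      rw [e₁, e₂]
      simp only [comm_mul_left hH, comm_mul_right hH]
      rw [e11, e22, comm_central_eq_one_right hz₂ a₁,
        comm_central_eq_one_right hz₂ b₁, comm_central_eq_one_left hz₁ a₂,
        comm_central_eq_one_left hz₁ b₂, comm_central_eq_one_left hz₁ z₂, ← hc]
      simp
    have hf1 : f h₁ = z₁ * ⁅a₁, b₁⁆ ^ k := rfl
    have hf2 : f h₂ = z₂ * ⁅a₂, b₂⁆ ^ k := rfl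
    rw [eprod, hfval _ (Hp.mul_mem (T h₁).1.2 (T h₂).1.2)
      _ (Hm.mul_mem (T h₁).2.1.2 (T h₂).2.1.2)
      _ (Z.mul_mem (Z.mul_mem hz₁ hz₂) hC),
      hcommexp, hcomm12, hf1, hf2]
    -- transfer to the commutative group Z
    have h2 : (⟨c, hC⟩ : Z) ^ k * (⟨c, hC⟩ : Z) ^ k = ⟨c, hC⟩ := by
      ext
      push_cast
      rw [← pow_add, hkk, pow_succ, hexp c, one_mul]
    have key := open scoped IsMulCommutative in key_commgroup (G := Z) k (T h₁).2.2 (T h₂).2.2 ⟨c, hC⟩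
      ⟨⁅a₁, b₁⁆, heis_comm_central hH a₁ b₁⟩
      ⟨⁅a₁, b₂⁆, heis_comm_central hH a₁ b₂⟩
      ⟨⁅a₂, b₂⁆, heis_comm_central hH a₂ b₂⟩ h2
    have key' := congrArg (Subtype.val) key
    push_cast at key'
    exact key'
  refine ⟨⟨f, hfcen, hffix, hfmul⟩, hfval, ?_⟩
  intro μ' hμp hμm
  apply SpecialIso.ext'
  funext h
  have h1 : h = ((T h).1 : H) * ((T h).2.1 : H) * ((T h).2.2 : H) := hT h
  set a := ((T h).1 : H); set b := ((T h).2.1 : H); set z := ((T h).2.2 : H)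
  have hza : z ∈ Z := (T h).2.2.2
  have hab : μ'.toFun (a * b) = ⁅a, b⁆ ^ k := by
    rw [μ'.mul_eq, hμp a (T h).1.2, hμm b (T h).2.1.2, one_mul, one_mul]
  calc μ'.toFun h = μ'.toFun (a * b * z) := by rw [← h1]
    _ = μ'.toFun (a * b) * μ'.toFun z * ⁅a * b, z⁆ ^ k := μ'.mul_eq _ _
    _ = ⁅a, b⁆ ^ k * z * 1 := by
        rw [hab, μ'.center_fix z hza, comm_central_eq_one_right hza, one_pow]
    _ = z * ⁅a, b⁆ ^ k := by
        rw [mul_one]; exact (central_comm hza _).symm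
    _ = f h := by rw [← hfval a (T h).1.2 b (T h).2.1.2 z hza, ← h1]
end

section
/- Let H be a Heisenberg p-group (p odd) with center Z, ν: H → W^♯ a special isomorphism, and (H⁺, Ĥ⁻) a polarization of H (H⁺ ∩ Z = {1}, Z ⊆ Ĥ⁻, and the images of H⁺ and Ĥ⁻ in W form a complete polarization). Then H⁻ := Ĥ⁻ ∩ ν⁻¹(W × {1}) is a subgroup of Ĥ⁻ satisfying H⁻ ∩ Z = {1} and Ĥ⁻ = H⁻ · Z; that is, H⁻ defines a splitting of the polarization (H⁺, Ĥ⁻). -/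
open scoped commutatorElement

/-- Given a special isomorphism `ν` (encoded by `μ`) on a Heisenberg `p`-group `H`
and a polarization `(H⁺, Ĥ⁻)` of `H`, the set `H⁻ = Ĥ⁻ ∩ ν⁻¹(W × {1})` is a subgroup
of `Ĥ⁻` with `H⁻ ∩ Z = {1}` and `Ĥ⁻ = H⁻ · Z`; i.e. it splits the polarization. -/
theorem splitting_of_polarization {p : ℕ} {H : Type*} [Group H]
    (hH : IsHeisenbergPGroup p H) (μ : SpecialIso p H)
    (Hp Hhat : Subgroup H)
    (hpz : Hp ⊓ Subgroup.center H = ⊥)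
    (hzle : Subgroup.center H ≤ Hhat)
    (hpab : ∀ a ∈ Hp, ∀ b ∈ Hp, a * b = b * a)
    (hhatab : ∀ a ∈ Hhat, ∀ b ∈ Hhat, a * b = b * a)
    (hfact : ∀ h : H, ∃ a ∈ Hp, ∃ b ∈ Hhat, h = a * b)
    (hdisj : ∀ a ∈ Hp, ∀ b ∈ Hhat, a * b ∈ Subgroup.center H → a = 1) :
    ∃ Hm : Subgroup H,
      (Hm : Set H) = {h : H | h ∈ Hhat ∧ μ.toFun h = 1} ∧
      Hm ≤ Hhat ∧
      Hm ⊓ Subgroup.center H = ⊥ ∧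
      (∀ h ∈ Hhat, ∃ m ∈ Hm, ∃ z ∈ Subgroup.center H, h = m * z) := by
  have hone : μ.toFun 1 = 1 := μ.center_fix 1 (Subgroup.one_mem _)
  have key : ∀ a ∈ Hhat, ∀ b ∈ Hhat, μ.toFun (a * b) = μ.toFun a * μ.toFun b := by
    intro a ha b hb
    have hc : ⁅a, b⁆ = 1 := by
      rw [commutatorElement_def, hhatab a ha b hb]; group
    rw [μ.mul_eq, hc, one_pow, mul_one]
  refine ⟨{ carrier := {h : H | h ∈ Hhat ∧ μ.toFun h = 1}
            one_mem' := ⟨Hhat.one_mem, hone⟩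
            mul_mem' := ?_
            inv_mem' := ?_ }, rfl, ?_, ?_, ?_⟩
  · rintro a b ⟨ha, ha1⟩ ⟨hb, hb1⟩
    exact ⟨Hhat.mul_mem ha hb, by rw [key a ha b hb, ha1, hb1, one_mul]⟩
  · rintro a ⟨ha, ha1⟩
    refine ⟨Hhat.inv_mem ha, ?_⟩
    have := key a⁻¹ (Hhat.inv_mem ha) a ha
    rw [inv_mul_cancel, hone, ha1, mul_one] at this
    exact this.symm
  · intro x hx; exact hx.1
  · rw [eq_bot_iff]
    rintro x ⟨⟨_, hx1⟩, hz⟩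
    have := μ.center_fix x hz
    rw [hx1] at this
    exact this.symm
  · intro h hh
    have hz : μ.toFun h ∈ Subgroup.center H := μ.mem_center h
    refine ⟨h * (μ.toFun h)⁻¹, ⟨Hhat.mul_mem hh (Hhat.inv_mem (hzle hz)), ?_⟩,
      μ.toFun h, hz, by group⟩
    rw [key h hh _ (Hhat.inv_mem (hzle hz)),
      μ.center_fix _ (Subgroup.inv_mem _ hz), mul_inv_cancel]
end
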